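/- The quotient space X_S = S³ / ι is simply connected. -/

import Mathlib

/-- The unit 3-sphere in `EuclideanSpace ℝ (Fin 4)`. -/
abbrev S3 : Type := ↥(Metric.sphere (0 : EuclideanSpace ℝ (Fin 4)) 1)

/-- The involution `ι(x₁, x₂, x₃, x₄) = (−x₁, −x₂, −x₃, x₄)` on the unit 3-sphere. -/
noncomputable def sphereInv (x : S3) : S3 :=
  ⟨(WithLp.toLp 2 (fun i => if i = 3 then (x : EuclideanSpace ℝ (Fin 4)) i
      else -(x : EuclideanSpace ℝ (Fin 4)) i) : EuclideanSpace ℝ (Fin 4)), by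
    have hx := x.2
    rw [mem_sphere_zero_iff_norm] at hx ⊢
    rw [EuclideanSpace.norm_eq] at hx ⊢
    simpa [apply_ite (‖·‖)] using hx⟩

/-- The quotient space `X_S = S³ / ι`, i.e. the quotient of the 3-sphere by the
equivalence relation identifying each point `p` with `ι p`, with the quotient topology. -/
abbrev XS : Type := Quot (fun p q : S3 => sphereInv p = q)

/-!
The height `x₄` descends to `X_S`. The open caps `{x₄ > -1}` and `{x₄ < 1}` of `X_S`, the
complements of the images of the two poles, are contractible: projecting radially onto `S³` the
segment from a point to the pole in its cap is `ι`-equivariant, since `ι` is the reflection in the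
`x₄`-axis and fixes the poles, so this contraction descends along the open quotient map
`S³ → X_S`. The caps meet in the image of `S³` minus the `x₄`-axis, which is path-connected
because the axis has codimension three. A space covered by two open simply connected sets with
path-connected intersection is simply connected: subdivide a path so that each piece lies in one
of the sets and close the pieces up with paths from a base point in the intersection.
-/

open Set Metric Function
open scoped RealInnerProductSpace

section SimplyConnected

open unitInterval

variable {X : Type*} [TopologicalSpace X]

theorem Path.Homotopic.of_trans_left {x y z : X} {α : Path x y} {p q : Path y z}
    (h : (α.trans p).Homotopic (α.trans q)) : p.Homotopic q := by
  rw [← Quotient.eq] at h ⊢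
  rw [Quotient.mk_trans, Quotient.mk_trans] at h
  simpa [← Quotient.trans_assoc] using congrArg (Quotient.trans (Quotient.mk α).symm) h

theorem IsSimplyConnected.homotopic_of_range_subset {s : Set X} (hs : IsSimplyConnected s)
    {x y : X} {p q : Path x y} (hp : range p ⊆ s) (hq : range q ⊆ s) : p.Homotopic q := by
  have := hs.simplyConnectedSpace
  let lift (r : Path x y) (hr : range r ⊆ s) :
      Path (⟨x, hp ⟨0, p.source⟩⟩ : s) ⟨y, hp ⟨1, p.target⟩⟩ :=
    { toFun t := ⟨r t, hr ⟨t, rfl⟩⟩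
      source' := by ext; simp
      target' := by ext; simp }
  exact (SimplyConnectedSpace.paths_homotopic (lift p hp) (lift q hq)).map
    ⟨Subtype.val, continuous_subtype_val⟩

namespace Path

variable {U V : Set X}

/-- Paths from a base point with this property close up the pieces of a subdivided path: if a
piece lies in `U`, so do the two such paths ending at its endpoints. -/
def IsAdapted (U V : Set X) {x y : X} (p : Path x y) : Prop :=
  (y ∈ U → range p ⊆ U) ∧ (y ∈ V → range p ⊆ V)

theorem IsAdapted.cast {x y y' : X} {p : Path x y} (hp : p.IsAdapted U V) (hy : y' = y) :
    (p.cast rfl hy).IsAdapted U V := by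
  subst hy
  exact hp

theorem exists_isAdapted (hU : IsPathConnected U) (hV : IsPathConnected V)
    (hUV : IsPathConnected (U ∩ V)) {x₀ z : X} (hx₀ : x₀ ∈ U ∩ V) (hz : z ∈ U ∪ V) :
    ∃ p : Path x₀ z, p.IsAdapted U V := by
  by_cases hzU : z ∈ U <;> by_cases hzV : z ∈ V
  · obtain ⟨p, hp⟩ := hUV.joinedIn x₀ hx₀ z ⟨hzU, hzV⟩
    exact ⟨p, fun _ ↦ range_subset_iff.2 fun t ↦ (hp t).1,
      fun _ ↦ range_subset_iff.2 fun t ↦ (hp t).2⟩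
  · obtain ⟨p, hp⟩ := hU.joinedIn x₀ hx₀.1 z hzU
    exact ⟨p, fun _ ↦ range_subset_iff.2 hp, fun h ↦ absurd h hzV⟩
  · obtain ⟨p, hp⟩ := hV.joinedIn x₀ hx₀.2 z hzV
    exact ⟨p, fun h ↦ absurd h hzU, fun _ ↦ range_subset_iff.2 hp⟩
  · exact (hz.elim hzU hzV).elim

theorem IsAdapted.trans_homotopic (hU : IsSimplyConnected U) (hV : IsSimplyConnected V)
    {x₀ x y : X} {α : Path x₀ x} {β : Path x₀ y} (hα : α.IsAdapted U V)
    (hβ : β.IsAdapted U V) {p : Path x y} (hp : range p ⊆ U ∨ range p ⊆ V) :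
    (α.trans p).Homotopic β := by
  rcases hp with hp | hp
  · refine hU.homotopic_of_range_subset ?_ (hβ.1 (hp ⟨1, p.target⟩))
    exact trans_range α p ▸ union_subset (hα.1 (hp ⟨0, p.source⟩)) hp
  · refine hV.homotopic_of_range_subset ?_ (hβ.2 (hp ⟨1, p.target⟩))
    exact trans_range α p ▸ union_subset (hα.2 (hp ⟨0, p.source⟩)) hp

theorem IsAdapted.trans_subpath_homotopic (hU : IsSimplyConnected U) (hV : IsSimplyConnected V)
    {x₀ x y : X} (hadapt : ∀ z, ∃ p : Path x₀ z, p.IsAdapted U V) (γ : Path x y)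
    {t : ℕ → I} (ht : Monotone t)
    (hcov : ∀ n, γ '' Icc (t n) (t (n + 1)) ⊆ U ∨ γ '' Icc (t n) (t (n + 1)) ⊆ V) (n : ℕ)
    {α : Path x₀ (γ (t 0))} {β : Path x₀ (γ (t n))} (hα : α.IsAdapted U V)
    (hβ : β.IsAdapted U V) : (α.trans (γ.subpath (t 0) (t n))).Homotopic β := by
  induction n with
  | zero =>
    rw [subpath_self]
    refine hα.trans_homotopic hU hV hβ ?_
    have h₀ : γ (t 0) ∈ γ '' Icc (t 0) (t 1) := mem_image_of_mem γ ⟨le_rfl, ht zero_le_one⟩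
    rw [refl_range, singleton_subset_iff, singleton_subset_iff]
    exact (hcov 0).imp (· h₀) (· h₀)
  | succ n ih =>
    obtain ⟨βₙ, hβₙ⟩ := hadapt (γ (t n))
    have hpiece :
        range (γ.subpath (t n) (t (n + 1))) ⊆ U ∨ range (γ.subpath (t n) (t (n + 1))) ⊆ V := by
      rw [range_subpath_of_le _ _ _ (ht n.le_succ)]
      exact hcov n
    calc Homotopic (α.trans (γ.subpath (t 0) (t (n + 1))))
          (α.trans ((γ.subpath (t 0) (t n)).trans (γ.subpath (t n) (t (n + 1))))) :=
          .hcomp (.refl α) ⟨(Homotopy.subpathTransSubpath γ _ _ _).symm⟩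
      Homotopic _ ((α.trans (γ.subpath (t 0) (t n))).trans (γ.subpath (t n) (t (n + 1)))) :=
          ⟨(Homotopy.transAssoc _ _ _).symm⟩
      Homotopic _ (βₙ.trans (γ.subpath (t n) (t (n + 1)))) := (ih hβₙ).hcomp (.refl _)
      Homotopic _ β := hβₙ.trans_homotopic hU hV hβ hpiece

theorem IsAdapted.trans_homotopic_of_isOpen (hUo : IsOpen U) (hVo : IsOpen V)
    (hcover : U ∪ V = univ) (hU : IsSimplyConnected U) (hV : IsSimplyConnected V)
    {x₀ x y : X} (hadapt : ∀ z, ∃ p : Path x₀ z, p.IsAdapted U V) (γ : Path x y)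
    {α : Path x₀ x} {β : Path x₀ y} (hα : α.IsAdapted U V) (hβ : β.IsAdapted U V) :
    (α.trans γ).Homotopic β := by
  obtain ⟨t, ht₀, ht, ⟨N, htN⟩, hcov⟩ := exists_monotone_Icc_subset_open_cover_unitInterval
    (c := fun b : Bool ↦ γ ⁻¹' bif b then U else V)
    (fun b ↦ by cases b <;> exact IsOpen.preimage γ.continuous ‹_›)
    (fun s _ ↦ (hcover ▸ mem_univ (γ s) : γ s ∈ U ∪ V).elim
      (fun h ↦ mem_iUnion.2 ⟨true, h⟩) (fun h ↦ mem_iUnion.2 ⟨false, h⟩))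
  have key := fun {α β} ↦
    trans_subpath_homotopic hU hV hadapt γ ht (fun n ↦ ?_) N (α := α) (β := β)
  · rw [ht₀, htN N le_rfl, subpath_zero_one] at key
    exact key (hα.cast γ.source) (hβ.cast γ.target)
  · obtain ⟨b, hb⟩ := hcov n
    rw [← image_subset_iff] at hb
    cases b
    exacts [.inr hb, .inl hb]

end Path

theorem simplyConnectedSpace_of_isOpen_of_union_eq_univ {U V : Set X} (hUo : IsOpen U)
    (hVo : IsOpen V) (hcover : U ∪ V = univ) (hU : IsSimplyConnected U)
    (hV : IsSimplyConnected V) (hUV : IsPathConnected (U ∩ V)) : SimplyConnectedSpace X := by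
  obtain ⟨x₀, hx₀⟩ := hUV.nonempty
  have hadapt (z : X) : ∃ p : Path x₀ z, p.IsAdapted U V :=
    Path.exists_isAdapted hU.isPathConnected hV.isPathConnected hUV hx₀ (hcover ▸ mem_univ z)
  have hjoined (z : X) : Joined x₀ z := let ⟨p, _⟩ := hadapt z; ⟨p⟩
  rw [simply_connected_iff_paths_homotopic']
  refine ⟨⟨⟨x₀⟩, fun x y ↦ (hjoined x).symm.trans (hjoined y)⟩, fun {x y} p q ↦ ?_⟩
  obtain ⟨α, hα⟩ := hadapt x
  obtain ⟨β, hβ⟩ := hadapt y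
  have (r : Path x y) := hα.trans_homotopic_of_isOpen hUo hVo hcover hU hV hadapt r hβ
  exact .of_trans_left ((this p).trans (this q).symm)

end SimplyConnected

section Quotient

open unitInterval

variable {X Y : Type*} [TopologicalSpace X] [TopologicalSpace Y]

theorem Function.Involutive.quot_mk_eq_quot_mk_iff {α : Type*} {f : α → α} (hf : Involutive f)
    {a b : α} : Quot.mk (fun p q ↦ f p = q) a = Quot.mk _ b ↔ a = b ∨ f a = b := by
  have hequiv : Equivalence fun a b ↦ a = b ∨ f a = b :=
    { refl _ := .inl rfl
      symm := by rintro a b (rfl | rfl) <;> simp [hf _]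
      trans := by rintro a b c (rfl | rfl) (rfl | rfl) <;> simp [hf _] }
  rw [Quot.eq]
  exact ⟨fun h ↦ hequiv.eqvGen_iff.1 (h.mono fun _ _ ↦ .inr),
    fun h ↦ h.elim (· ▸ .refl _) (.rel _ _ ·)⟩

theorem Function.Involutive.isOpenQuotientMap_quot_mk {f : X → X} (hf : Involutive f)
    (hc : Continuous f) : IsOpenQuotientMap (Quot.mk fun p q ↦ f p = q) := by
  refine ⟨Quot.mk_surjective, continuous_quot_mk, fun s hs ↦ ?_⟩
  have : Quot.mk (fun p q ↦ f p = q) ⁻¹' (Quot.mk _ '' s) = s ∪ f ⁻¹' s := by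
    ext x
    simp only [mem_preimage, mem_image, hf.quot_mk_eq_quot_mk_iff, mem_union]
    constructor
    · rintro ⟨y, hy, rfl | rfl⟩
      exacts [.inl hy, .inr ((hf y).symm ▸ hy)]
    · rintro (hx | hx)
      exacts [⟨x, hx, .inl rfl⟩, ⟨f x, hx, .inr (hf x)⟩]
  rw [← isQuotientMap_quot_mk.isOpen_preimage, this]
  exact hs.union (hs.preimage hc)

theorem ContractibleSpace.of_isOpenQuotientMap {f : X → Y} (hf : IsOpenQuotientMap f) {x₀ : X}
    (H : (ContinuousMap.id X).Homotopy (.const X x₀))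
    (hH : ∀ t, FactorsThrough (fun x ↦ f (H (t, x))) f) : ContractibleSpace Y := by
  let q : C(I × X, I × Y) := .prodMap (.id I) ⟨f, hf.continuous⟩
  have hq : IsOpenQuotientMap q := IsOpenQuotientMap.id.prodMap hf
  have hfac : FactorsThrough (fun p ↦ f (H p)) q := by
    rintro ⟨s, x⟩ ⟨s', x'⟩ h
    obtain ⟨rfl, hx⟩ := Prod.ext_iff.1 h
    exact hH s hx
  let G : C(I × Y, Y) := hq.isQuotientMap.lift ⟨_, hf.continuous.comp H.continuous⟩ hfac
  have hG (t : I) (x : X) : G (t, f x) = f (H (t, x)) := by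
    change G.comp q (t, x) = _
    rw [hq.isQuotientMap.lift_comp]
    rfl
  rw [contractible_iff_id_nullhomotopic]
  refine ⟨f x₀, ⟨⟨G, fun y ↦ ?_, fun y ↦ ?_⟩⟩⟩ <;> obtain ⟨x, rfl⟩ := hf.surjective y <;> simp [hG]

end Quotient

section Sphere

variable {E F : Type*} [NormedAddCommGroup E] [InnerProductSpace ℝ E] [NormedAddCommGroup F]
  [InnerProductSpace ℝ F]

noncomputable def normalizedLerp (x y : E) (t : ℝ) : E :=
  ‖(1 - t) • x + t • y‖⁻¹ • ((1 - t) • x + t • y)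

theorem norm_lerp_sq {x y : E} (hx : ‖x‖ = 1) (hy : ‖y‖ = 1) (t : ℝ) :
    ‖(1 - t) • x + t • y‖ ^ 2 = (1 - t) ^ 2 + t ^ 2 + 2 * t * (1 - t) * ⟪x, y⟫ := by
  rw [norm_add_sq_real, norm_smul, norm_smul, real_inner_smul_left, real_inner_smul_right, hx, hy,
    Real.norm_eq_abs, Real.norm_eq_abs, mul_one, mul_one, sq_abs, sq_abs]
  ring

theorem lerp_ne_zero {x y : E} (hx : ‖x‖ = 1) (hy : ‖y‖ = 1) (hxy : -1 < ⟪x, y⟫) (t : ℝ) :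
    (1 - t) • x + t • y ≠ 0 := by
  intro h
  have hsq := norm_lerp_sq hx hy t
  rw [h, norm_zero] at hsq
  nlinarith [real_inner_le_one_of_norm_eq_one hx hy, sq_nonneg (1 - 2 * t)]

theorem norm_normalizedLerp {x y : E} (hx : ‖x‖ = 1) (hy : ‖y‖ = 1) (hxy : -1 < ⟪x, y⟫)
    (t : ℝ) : ‖normalizedLerp x y t‖ = 1 :=
  norm_smul_inv_norm (lerp_ne_zero hx hy hxy t)

theorem neg_one_lt_inner_normalizedLerp {x y : E} (hx : ‖x‖ = 1) (hy : ‖y‖ = 1)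
    (hxy : -1 < ⟪x, y⟫) (t : ℝ) : -1 < ⟪normalizedLerp x y t, y⟫ := by
  have hn : 0 < ‖(1 - t) • x + t • y‖ := norm_pos_iff.2 (lerp_ne_zero hx hy hxy t)
  have hinner : ⟪normalizedLerp x y t, y⟫ = ((1 - t) * ⟪x, y⟫ + t) / ‖(1 - t) • x + t • y‖ := by
    rw [normalizedLerp, real_inner_smul_left, inner_add_left, real_inner_smul_left,
      real_inner_smul_left, real_inner_self_eq_norm_sq, hy]
    ring
  rw [hinner, lt_div_iff₀ hn, neg_one_mul]
  rcases le_or_gt 0 ((1 - t) * ⟪x, y⟫ + t) with hnum | hnum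
  · linarith
  have ht : 1 - t ≠ 0 := fun h ↦ by nlinarith
  have hxy' : ⟪x, y⟫ < 1 := (real_inner_le_one_of_norm_eq_one hx hy).lt_of_ne fun h ↦ by
    rw [h] at hnum; linarith
  -- `‖(1 - t) • x + t • y‖ ^ 2 - ((1 - t) * ⟪x, y⟫ + t) ^ 2 = (1 - t) ^ 2 * (1 - ⟪x, y⟫ ^ 2)`
  refine (abs_lt_of_sq_lt_sq' ?_ hn.le).1
  rw [norm_lerp_sq hx hy]
  nlinarith [mul_pos (sq_pos_of_ne_zero ht) (mul_pos (sub_pos.2 hxy') (neg_lt_iff_pos_add.1 hxy))]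

theorem LinearIsometry.map_normalizedLerp (L : E →ₗᵢ[ℝ] F) (x y : E) (t : ℝ) :
    L (normalizedLerp x y t) = normalizedLerp (L x) (L y) t := by
  simp [normalizedLerp, ← L.norm_map ((1 - t) • x + t • y)]

theorem normalizedLerp_zero {x y : E} (hx : ‖x‖ = 1) : normalizedLerp x y 0 = x := by
  simp [normalizedLerp, hx]

theorem normalizedLerp_one {x y : E} (hy : ‖y‖ = 1) : normalizedLerp x y 1 = y := by
  simp [normalizedLerp, hy]

theorem mem_span_singleton_iff_abs_inner_eq_one {x v : E} (hx : ‖x‖ = 1) (hv : ‖v‖ = 1) :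
    x ∈ ℝ ∙ v ↔ |⟪v, x⟫| = 1 := by
  constructor
  · intro h
    obtain ⟨a, rfl⟩ := Submodule.mem_span_singleton.1 h
    rw [norm_smul, hv, mul_one, Real.norm_eq_abs] at hx
    rwa [real_inner_smul_right, real_inner_self_eq_norm_sq, hv, one_pow, mul_one]
  · intro h
    obtain ⟨-, r, -, rfl⟩ := (abs_real_inner_div_norm_mul_norm_eq_one_iff v x).1 (by
      rwa [hx, hv, mul_one, div_one])
    exact Submodule.smul_mem _ r (Submodule.mem_span_singleton_self v)

theorem isPathConnected_sphere_sdiff_span_singleton {v : E}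
    (h : 1 < Module.rank ℝ (E ⧸ ℝ ∙ v)) : IsPathConnected (sphere (0 : E) 1 \ (ℝ ∙ v)) := by
  have hne {w : E} (hw : w ∉ ℝ ∙ v) : w ≠ 0 := fun h ↦ hw (h ▸ zero_mem _)
  have himage : (fun w : E ↦ ‖w‖⁻¹ • w) '' (ℝ ∙ v : Set E)ᶜ = sphere (0 : E) 1 \ (ℝ ∙ v) := by
    ext x
    constructor
    · rintro ⟨w, hw, rfl⟩
      refine ⟨mem_sphere_zero_iff_norm.2 (norm_smul_inv_norm (hne hw)), fun hmem ↦ hw ?_⟩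
      exact (Submodule.smul_mem_iff _ (inv_ne_zero (norm_ne_zero_iff.2 (hne hw)))).1 hmem
    · rintro ⟨hx, hxv⟩
      exact ⟨x, hxv, by simp [mem_sphere_zero_iff_norm.1 hx]⟩
  rw [← himage]
  refine (isPathConnected_compl_of_one_lt_codim h).image' ?_
  exact (continuousOn_id.norm.inv₀ fun w hw ↦ norm_ne_zero_iff.2 (hne hw)).smul continuousOn_id

end Sphere

local notation "E4" => EuclideanSpace ℝ (Fin 4)
local notation "π" => Quot.mk fun p q : S3 ↦ sphereInv p = q

-- `Fin 4` indexes coordinates from `0`, so `x₄` is coordinate `3`.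
noncomputable def northPole : E4 := EuclideanSpace.single 3 1

theorem norm_northPole : ‖northPole‖ = 1 := by simp [northPole]

theorem norm_coe_S3 (x : S3) : ‖(x : E4)‖ = 1 := mem_sphere_zero_iff_norm.1 x.2

theorem coe_sphereInv (x : S3) : (sphereInv x : E4) = (ℝ ∙ northPole).reflection x := by
  ext i
  rw [Submodule.reflection_singleton_apply, norm_northPole]
  by_cases hi : i = 3 <;>
    simp [hi, sphereInv, northPole, EuclideanSpace.inner_single_left, two_mul]

theorem reflection_northPole : (ℝ ∙ northPole).reflection northPole = northPole :=
  Submodule.reflection_mem_subspace_eq_self (Submodule.mem_span_singleton_self _)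

theorem sphereInv_involutive : Involutive sphereInv := fun x ↦
  Subtype.ext (by rw [coe_sphereInv, coe_sphereInv, Submodule.reflection_reflection])

theorem continuous_sphereInv : Continuous sphereInv := by
  refine Topology.IsInducing.subtypeVal.continuous_iff.2 ?_
  simp_rw [comp_def, coe_sphereInv]
  fun_prop

namespace XS

noncomputable def height : XS → ℝ :=
  Quot.lift (fun x ↦ ⟪(x : E4), northPole⟫) fun x _ h ↦ by
    have := (ℝ ∙ northPole).reflection.inner_map_map x northPole
    rw [reflection_northPole] at this
    rw [← h, coe_sphereInv, this]

theorem continuous_height : Continuous height :=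
  continuous_quot_lift _ (by fun_prop)

def cap (σ : ℝ) : Set XS := {u | -1 < σ * height u}

theorem isOpen_cap (σ : ℝ) : IsOpen (cap σ) :=
  isOpen_Ioi.preimage (continuous_const.mul continuous_height)

theorem cap_union_cap : cap 1 ∪ cap (-1) = univ :=
  eq_univ_of_forall fun u ↦ (lt_or_ge (-1) (height u)).imp (by simp [cap, ·]) fun h ↦ by
    show -1 < -1 * height u
    linarith

theorem mem_preimage_cap {σ : ℝ} {x : S3} :
    x ∈ π ⁻¹' cap σ ↔ -1 < ⟪(x : E4), σ • northPole⟫ := by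
  rw [real_inner_smul_right]
  rfl

theorem norm_smul_northPole {σ : ℝ} (hσ : |σ| = 1) : ‖σ • northPole‖ = 1 := by
  rw [norm_smul, norm_northPole, Real.norm_eq_abs, hσ, mul_one]

noncomputable def capCenter {σ : ℝ} (hσ : |σ| = 1) : π ⁻¹' cap σ :=
  ⟨⟨σ • northPole, mem_sphere_zero_iff_norm.2 (norm_smul_northPole hσ)⟩, by
    rw [mem_preimage_cap, real_inner_self_eq_norm_sq, norm_smul_northPole hσ]
    norm_num⟩

noncomputable def capContraction {σ : ℝ} (hσ : |σ| = 1) :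
    (ContinuousMap.id (π ⁻¹' cap σ)).Homotopy (.const _ (capCenter hσ)) where
  toFun p := ⟨⟨normalizedLerp p.2 (σ • northPole) p.1, mem_sphere_zero_iff_norm.2 <|
      norm_normalizedLerp (norm_coe_S3 _) (norm_smul_northPole hσ) (mem_preimage_cap.1 p.2.2) _⟩,
    mem_preimage_cap.2 <| neg_one_lt_inner_normalizedLerp (norm_coe_S3 _)
      (norm_smul_northPole hσ) (mem_preimage_cap.1 p.2.2) _⟩
  continuous_toFun := by
    refine .subtype_mk (.subtype_mk ?_ _) _
    have hlerp : Continuous fun p : unitInterval × π ⁻¹' cap σ ↦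
        (1 - (p.1 : ℝ)) • (p.2 : E4) + (p.1 : ℝ) • (σ • northPole) := by fun_prop
    refine (hlerp.norm.inv₀ fun p ↦ norm_ne_zero_iff.2 ?_).smul hlerp
    exact lerp_ne_zero (norm_coe_S3 _) (norm_smul_northPole hσ) (mem_preimage_cap.1 p.2.2) _
  map_zero_left x := by
    ext1; ext1; exact normalizedLerp_zero (norm_coe_S3 _)
  map_one_left x := by
    ext1; ext1; exact normalizedLerp_one (norm_smul_northPole hσ)

theorem sphereInv_capContraction {σ : ℝ} (hσ : |σ| = 1) (t : unitInterval) {x x' : π ⁻¹' cap σ}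
    (h : sphereInv x = x') :
    sphereInv (capContraction hσ (t, x)) = capContraction hσ (t, x') := by
  ext1
  rw [coe_sphereInv]
  change (ℝ ∙ northPole).reflection.toLinearIsometry
    (normalizedLerp ((x : S3) : E4) (σ • northPole) t) =
      normalizedLerp ((x' : S3) : E4) (σ • northPole) t
  rw [LinearIsometry.map_normalizedLerp]
  simp [← h, coe_sphereInv, reflection_northPole]

theorem contractibleSpace_cap {σ : ℝ} (hσ : |σ| = 1) : ContractibleSpace (cap σ) := by
  have hπ := sphereInv_involutive.isOpenQuotientMap_quot_mk continuous_sphereInv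
  refine .of_isOpenQuotientMap (hπ.restrictPreimage (cap σ)) (capContraction hσ)
    fun t x x' h ↦ Subtype.ext ?_
  rcases sphereInv_involutive.quot_mk_eq_quot_mk_iff.1 (congrArg Subtype.val h) with h | h
  · rw [Subtype.ext h]
  · exact (Quot.sound (r := fun p q : S3 ↦ sphereInv p = q) rfl).trans
      (congrArg _ (sphereInv_capContraction hσ t h))

theorem cap_inter_cap :
    cap 1 ∩ cap (-1) = π '' (Subtype.val ⁻¹' (sphere 0 1 \ (ℝ ∙ northPole))) := by
  rw [← image_preimage_eq (cap 1 ∩ cap (-1)) Quot.mk_surjective]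
  congr 1
  ext x
  have habs : |⟪northPole, (x : E4)⟫| ≤ 1 := by
    simpa [norm_northPole, norm_coe_S3] using abs_real_inner_le_norm northPole x
  change -1 < 1 * ⟪(x : E4), northPole⟫ ∧ -1 < -1 * ⟪(x : E4), northPole⟫ ↔
    (x : E4) ∈ sphere 0 1 ∧ (x : E4) ∉ ℝ ∙ northPole
  rw [mem_span_singleton_iff_abs_inner_eq_one (norm_coe_S3 x) norm_northPole, ← ne_eq,
    ← habs.lt_iff_ne, abs_lt, real_inner_comm, one_mul, neg_one_mul, neg_lt_neg_iff]
  exact (and_iff_right x.2).symm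

theorem one_lt_rank_quotient_span_northPole : 1 < Module.rank ℝ (E4 ⧸ ℝ ∙ northPole) := by
  have h := (ℝ ∙ northPole).finrank_quotient_add_finrank
  rw [finrank_span_singleton (norm_ne_zero_iff.1 (norm_northPole.trans_ne one_ne_zero)),
    finrank_euclideanSpace_fin] at h
  rw [← Module.finrank_eq_rank, (by omega : Module.finrank ℝ (E4 ⧸ ℝ ∙ northPole) = 3)]
  norm_num

theorem isPathConnected_cap_inter_cap : IsPathConnected (cap 1 ∩ cap (-1)) := by
  rw [cap_inter_cap]
  have := isPathConnected_sphere_sdiff_span_singleton one_lt_rank_quotient_span_northPole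
  exact (this.preimage_coe sdiff_subset).image continuous_quot_mk

end XS

/-- The quotient `X_S = S³ / ι` is simply connected. -/
theorem XS_simplyConnected : SimplyConnectedSpace XS := by
  have (σ : ℝ) (hσ : |σ| = 1) : IsSimplyConnected (XS.cap σ) :=
    have := XS.contractibleSpace_cap hσ
    SimplyConnectedSpace.ofContractible _
  exact simplyConnectedSpace_of_isOpen_of_union_eq_univ (XS.isOpen_cap 1) (XS.isOpen_cap (-1))
    XS.cap_union_cap (this 1 (by norm_num)) (this (-1) (by norm_num))
    XS.isPathConnected_cap_inter_cap
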